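/- Let G be the simple graph on vertex set {a, b, c, d, e} with edge set {ab, ac, ae, be, ce, ad, de}. Then G is a connected even graph, and every cycle decomposition of G contains two distinct cycles that intersect in at least two vertices; that is, no cycle decomposition of G has a simple cycle intersection graph. -/

import Mathlib

/-!
Label `a, b, c, d, e` as `0, 1, 2, 3, 4`. Every vertex other than `a` and `e` has exactly the
neighbours `a` and `e`. A cycle has at least three vertices, so it passes through such a vertex,
and since it has degree two there it contains both `a` and `e`. As `a` has degree four, at least
two cycles of any decomposition pass through `a`, and any two cycles share `a` and `e`.
-/

open SimpleGraph

variable {V : Type*}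

/-- A graph is *even* if every vertex has even degree. -/
def IsEvenGraph (G : SimpleGraph V) : Prop :=
  ∀ v : V, Even (G.neighborSet v).ncard

/-- A subgraph is a *cycle* if it is connected and every one of its vertices has degree 2. -/
def IsCycleSubgraph {G : SimpleGraph V} (H : G.Subgraph) : Prop :=
  H.Connected ∧ ∀ v ∈ H.verts, (H.neighborSet v).ncard = 2

/-- A *cycle decomposition* of `G` is a family of cycle subgraphs such that every edge of `G`
lies in exactly one of them. -/
def IsCycleDecomposition (G : SimpleGraph V) (𝒞 : Set G.Subgraph) : Prop :=
  (∀ C ∈ 𝒞, IsCycleSubgraph C) ∧ ∀ e ∈ G.edgeSet, ∃! C, C ∈ 𝒞 ∧ e ∈ SimpleGraph.Subgraph.edgeSet C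

/-- The edges of the cycle intersection *multigraph* of a cycle decomposition `𝒞`:
one edge joining `C` and `C'` for each pair of distinct cycles `C ≠ C'` of `𝒞` and each
vertex `v` lying on both (the edge is labelled by `v`). -/
def CIEdges (G : SimpleGraph V) (𝒞 : Set G.Subgraph) : Set (Sym2 G.Subgraph × V) :=
  {p | ∃ C ∈ 𝒞, ∃ C' ∈ 𝒞, ∃ v : V, C ≠ C' ∧
    v ∈ C.verts ∩ SimpleGraph.Subgraph.verts C' ∧ p = (s(C, C'), v)}

/-- The underlying simple graph of the cycle intersection graph of a cycle decomposition:
two distinct cycles are adjacent iff they share a vertex. -/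
def CIGraph (G : SimpleGraph V) (𝒞 : Set G.Subgraph) : SimpleGraph 𝒞 where
  Adj C D := C ≠ D ∧ ((C : G.Subgraph).verts ∩ (D : G.Subgraph).verts).Nonempty
  symm := by
    refine ⟨?_⟩
    rintro C D ⟨h1, h2⟩
    exact ⟨h1.symm, by rwa [Set.inter_comm] at h2⟩
  loopless := by refine ⟨?_⟩; rintro C ⟨h1, _⟩; exact h1 rfl

/-- The cycle intersection graph is *simple* iff any two distinct cycles of the decomposition
intersect in at most one vertex. -/
def CISimple (G : SimpleGraph V) (𝒞 : Set G.Subgraph) : Prop :=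
  ∀ C ∈ 𝒞, ∀ D ∈ 𝒞, C ≠ D →
    ((C : G.Subgraph).verts ∩ (D : G.Subgraph).verts).ncard ≤ 1

/-- `S` is a decycling set of `G` iff `G - S` is acyclic. -/
def IsDecyclingSet (G : SimpleGraph V) (S : Set V) : Prop :=
  (G.induce Sᶜ).IsAcyclic

/-- The decycling number of `G`: the minimum size of a decycling set. -/
noncomputable def decyclingNumber (G : SimpleGraph V) : ℕ :=
  sInf {n | ∃ S : Set V, IsDecyclingSet G S ∧ S.ncard = n}

/-- The *size* of a spanning forest: its number of edges plus its number of isolated vertices. -/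
noncomputable def forestSize {W : Type*} (F : SimpleGraph W) : ℕ :=
  F.edgeSet.ncard + {v : W | ∀ w, ¬ F.Adj v w}.ncard

/-- The minimum size of a spanning forest of `H` (a spanning forest is an acyclic spanning
subgraph; note a subgraph `F ≤ H` on the same vertex type is automatically spanning). -/
noncomputable def MSF {W : Type*} (H : SimpleGraph W) : ℕ :=
  sInf {n | ∃ F ≤ H, F.IsAcyclic ∧ forestSize F = n}

theorem Set.ncard_pair_le {α : Type*} (a b : α) : ({a, b} : Set α).ncard ≤ 2 :=
  (Set.ncard_insert_le a {b}).trans_eq (by rw [Set.ncard_singleton])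

namespace IsCycleSubgraph

variable {G : SimpleGraph V} {C : G.Subgraph}

theorem three_le_ncard_verts [Finite V] (hC : IsCycleSubgraph C) : 3 ≤ C.verts.ncard := by
  obtain ⟨v, hv⟩ := hC.1.nonempty
  have hvN : v ∉ C.neighborSet v := fun h => (C.adj_sub h).ne rfl
  have hsub : insert v (C.neighborSet v) ⊆ C.verts :=
    Set.insert_subset hv (C.neighborSet_subset_verts v)
  calc 3 = (insert v (C.neighborSet v)).ncard := by rw [Set.ncard_insert_of_notMem hvN, hC.2 v hv]
    _ ≤ C.verts.ncard := Set.ncard_le_ncard hsub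

theorem exists_mem_verts_ne [Finite V] (hC : IsCycleSubgraph C) (u w : V) :
    ∃ x ∈ C.verts, x ≠ u ∧ x ≠ w := by
  by_contra! h
  have hsub : C.verts ⊆ {u, w} := fun x hx => (eq_or_ne x u).imp id (h x hx)
  have := (Set.ncard_le_ncard hsub).trans (Set.ncard_pair_le u w)
  have := hC.three_le_ncard_verts
  omega

theorem neighborSet_eq [Finite V] (hC : IsCycleSubgraph C) {x : V} (hx : x ∈ C.verts)
    (hdeg : (G.neighborSet x).ncard ≤ 2) : C.neighborSet x = G.neighborSet x :=
  Set.eq_of_subset_of_ncard_le (C.neighborSet_subset x) (hC.2 x hx ▸ hdeg)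

theorem pair_subset_verts [Finite V] (hC : IsCycleSubgraph C) {u w : V}
    (huw : ∀ x, x ≠ u → x ≠ w → G.neighborSet x = {u, w}) : {u, w} ⊆ C.verts := by
  obtain ⟨x, hx, hxu, hxw⟩ := hC.exists_mem_verts_ne u w
  have hCx : C.neighborSet x = {u, w} := by
    rw [hC.neighborSet_eq hx (huw x hxu hxw ▸ Set.ncard_pair_le u w), huw x hxu hxw]
  calc {u, w} = C.neighborSet x := hCx.symm
    _ ⊆ C.verts := C.neighborSet_subset_verts x

end IsCycleSubgraph

theorem IsCycleDecomposition.exists_ne_of_two_lt_ncard_neighborSet {G : SimpleGraph V}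
    {𝒞 : Set G.Subgraph} (h𝒞 : IsCycleDecomposition G 𝒞) {v : V}
    (hv : 2 < (G.neighborSet v).ncard) : ∃ C ∈ 𝒞, ∃ D ∈ 𝒞, C ≠ D := by
  obtain ⟨w, hw⟩ := Set.nonempty_of_ncard_ne_zero (by omega : (G.neighborSet v).ncard ≠ 0)
  obtain ⟨C, ⟨hC, hvw⟩, -⟩ := h𝒞.2 s(v, w) hw
  have hCdeg := (h𝒞.1 C hC).2 v (C.edge_vert hvw)
  obtain ⟨y, hyG, hyC⟩ : ∃ y ∈ G.neighborSet v, y ∉ C.neighborSet v := by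
    by_contra! hsub
    have := Set.ncard_le_ncard hsub (Set.finite_of_ncard_ne_zero (by omega))
    omega
  obtain ⟨D, ⟨hD, hvy⟩, -⟩ := h𝒞.2 s(v, y) hyG
  exact ⟨C, hC, D, hD, by rintro rfl; exact hyC hvy⟩

def exampleGraph : SimpleGraph (Fin 5) := SimpleGraph.fromEdgeSet
  {s(0, 1), s(0, 2), s(0, 4), s(1, 4), s(2, 4), s(0, 3), s(3, 4)}

theorem exampleGraph_adj {u v : Fin 5} :
    exampleGraph.Adj u v ↔ u ≠ v ∧ (u = 0 ∨ u = 4 ∨ v = 0 ∨ v = 4) := by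
  simp only [exampleGraph, fromEdgeSet_adj, Set.mem_insert_iff, Set.mem_singleton_iff]
  fin_cases u <;> fin_cases v <;> decide

theorem exampleGraph_neighborSet_of_ne {x : Fin 5} (hx0 : x ≠ 0) (hx4 : x ≠ 4) :
    exampleGraph.neighborSet x = {0, 4} := by
  ext w
  simp only [mem_neighborSet, exampleGraph_adj, Set.mem_insert_iff, Set.mem_singleton_iff]
  fin_cases x <;> fin_cases w <;> simp_all

theorem exampleGraph_ncard_neighborSet (v : Fin 5) :
    (exampleGraph.neighborSet v).ncard = if v = 0 ∨ v = 4 then 4 else 2 := by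
  have : exampleGraph.neighborSet v = {w | v ≠ w ∧ (v = 0 ∨ v = 4 ∨ w = 0 ∨ w = 4)} := by
    ext w; exact exampleGraph_adj
  rw [this, Set.ncard_eq_toFinset_card']
  fin_cases v <;> decide

theorem exampleGraph_connected : exampleGraph.Connected := by
  have hreach (w : Fin 5) : exampleGraph.Reachable 0 w := by
    rcases eq_or_ne w 0 with rfl | hw
    · rfl
    · exact (exampleGraph_adj.2 ⟨hw.symm, Or.inl rfl⟩).reachable
  exact ⟨fun u v => (hreach u).symm.trans (hreach v)⟩

theorem exampleGraph_isEvenGraph : IsEvenGraph exampleGraph := fun v => by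
  rw [exampleGraph_ncard_neighborSet]
  split_ifs <;> decide

/-- The simple graph on vertices `{a, b, c, d, e} = {0, 1, 2, 3, 4}` with
edge set `{ab, ac, ae, be, ce, ad, de}` is a connected even graph, yet every cycle
decomposition of it contains two distinct cycles intersecting in at least two vertices;
i.e. no cycle decomposition of it has a simple cycle intersection graph. -/
theorem exists_evenGraph_no_simple_CI :
    let G : SimpleGraph (Fin 5) := SimpleGraph.fromEdgeSet
      {s(0, 1), s(0, 2), s(0, 4), s(1, 4), s(2, 4), s(0, 3), s(3, 4)}
    G.Connected ∧ IsEvenGraph G ∧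
      ∀ 𝒞 : Set G.Subgraph, IsCycleDecomposition G 𝒞 →
        ∃ C ∈ 𝒞, ∃ D ∈ 𝒞, C ≠ D ∧
          2 ≤ ((C : G.Subgraph).verts ∩ (D : G.Subgraph).verts).ncard := by
  intro G
  refine ⟨exampleGraph_connected, exampleGraph_isEvenGraph, fun 𝒞 h𝒞 => ?_⟩
  have hdeg : 2 < (exampleGraph.neighborSet 0).ncard := by
    rw [exampleGraph_ncard_neighborSet]; decide
  obtain ⟨C, hC, D, hD, hCD⟩ := h𝒞.exists_ne_of_two_lt_ncard_neighborSet hdeg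
  have hubs (E) (hE : E ∈ 𝒞) : {0, 4} ⊆ E.verts :=
    (h𝒞.1 E hE).pair_subset_verts fun _ => exampleGraph_neighborSet_of_ne
  refine ⟨C, hC, D, hD, hCD, ?_⟩
  calc 2 = ({0, 4} : Set (Fin 5)).ncard := (Set.ncard_pair (by decide)).symm
    _ ≤ _ := Set.ncard_le_ncard (Set.subset_inter (hubs C hC) (hubs D hD))
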